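/- Under (A0), (B1), (B2), let f_n(x) = ℙ_x(τ_ϑ > n) / ℙ_e(τ_ϑ > n). Then each f_n is superharmonic for the killed chain and satisfies Q(x,e) ≤ f_n(x) ≤ 1/Q(e,x) for all x ∈ E and n ≥ 0; in particular the sequence (f_n) is relatively compact for pointwise convergence. -/
import Mathlib


open scoped ENNReal Classical BigOperators
open Filter

noncomputable section

namespace RW

variable {G : Type*}

/-- One-step transition operator `Pφ(x) = Σ_y p(x,y) φ(y)`. -/
def kapp (p : G → G → ℝ≥0∞) (φ : G → ℝ≥0∞) (x : G) : ℝ≥0∞ := ∑' y, p x y * φ y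

/-- n-step transition kernel. -/
def kiter (p : G → G → ℝ≥0∞) : ℕ → G → G → ℝ≥0∞
  | 0 => fun x y => if x = y then 1 else 0
  | n + 1 => fun x y => ∑' z, p x z * kiter p n z y

/-- Green function `G(x,y) = Σ_t ℙ_x(X(t)=y)`. -/
def green (p : G → G → ℝ≥0∞) (x y : G) : ℝ≥0∞ := ∑' n, kiter p n x y

/-- Green operator `Gφ(x) = Σ_y G(x,y) φ(y)`. -/
def greenApp (p : G → G → ℝ≥0∞) (φ : G → ℝ≥0∞) (x : G) : ℝ≥0∞ := ∑' y, green p x y * φ y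

/-- Probability of first hitting `y` at time `n ≥ 1`. -/
def fhit (p : G → G → ℝ≥0∞) : ℕ → G → G → ℝ≥0∞
  | 0 => fun _ _ => 0
  | 1 => p
  | n + 2 => fun x y => ∑' z, if z = y then 0 else p x z * fhit p (n + 1) z y

/-- Hitting probability `Q(x,y) = ℙ_x(∃ t ≥ 1, X(t) = y)`. -/
def hitProb (p : G → G → ℝ≥0∞) (x y : G) : ℝ≥0∞ := ∑' n, fhit p n x y

/-- Survival probability `ℙ_x(τ_ϑ > n)`. -/
def surv (p : G → G → ℝ≥0∞) (n : ℕ) (x : G) : ℝ≥0∞ := ∑' y, kiter p n x y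

/-- Expected lifetime `𝔼_x(τ_ϑ) = Σ_n ℙ_x(τ_ϑ > n)`. -/
def gexp (p : G → G → ℝ≥0∞) (x : G) : ℝ≥0∞ := ∑' n, surv p n x

variable [Group G]

/-- Matrix coefficients `a_u(x,y)` of the operator `A_u = T_u P - P T_u`. -/
def acoef (p : G → G → ℝ≥0∞) (E : Set G) (u x y : G) : ℝ≥0∞ :=
  if y * u⁻¹ ∈ E then p (x * u) y - p x (y * u⁻¹) else p (x * u) y

/-- The operator `A_u φ(x) = Σ_y a_u(x,y) φ(y)`. -/
def Aop (p : G → G → ℝ≥0∞) (E : Set G) (u : G) (φ : G → ℝ≥0∞) (x : G) : ℝ≥0∞ :=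
  ∑' y, acoef p E u x y * φ y

/-- Ladder height transition kernel `p_H(x,y) = G A_x 𝟙_{y}(e)`. -/
def ladder (p : G → G → ℝ≥0∞) (E : Set G) (x y : G) : ℝ≥0∞ :=
  ∑' z, green p 1 z * acoef p E x z y

/-- The renewal function `V(x) = 𝔼_x(𝒯_ϑ)` of the ladder height process. -/
def V (p : G → G → ℝ≥0∞) (E : Set G) (x : G) : ℝ≥0∞ :=
  ∑' n, surv (ladder p E) n x

end RW

end

open RW

section Aux

variable {G : Type*} (p : G → G → ℝ≥0∞)

lemma surv_zero (x : G) : surv p 0 x = 1 := by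
  rw [surv, tsum_eq_single x]
  · simp [kiter]
  · intro y hy
    simp only [kiter]
    exact if_neg fun h => hy h.symm

lemma surv_succ (n : ℕ) (x : G) : surv p (n + 1) x = ∑' z, p x z * surv p n z := by
  simp only [surv, kiter]
  rw [ENNReal.tsum_comm]
  exact tsum_congr fun z => ENNReal.tsum_mul_left

lemma surv_succ_le (hsub : ∀ x, (∑' y, p x y) ≤ 1) (n : ℕ) :
    ∀ x : G, surv p (n + 1) x ≤ surv p n x := by
  induction n with
  | zero =>
    intro x
    rw [surv_zero, surv_succ]
    calc ∑' z, p x z * surv p 0 z = ∑' z, p x z := by simp [surv_zero]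
      _ ≤ 1 := hsub x
  | succ n ih =>
    intro x
    rw [surv_succ, surv_succ]
    exact ENNReal.tsum_le_tsum fun z => mul_le_mul_right (ih z) _

lemma surv_anti (hsub : ∀ x, (∑' y, p x y) ≤ 1) (x : G) {m n : ℕ} (h : m ≤ n) :
    surv p n x ≤ surv p m x :=
  antitone_nat_of_succ_le (f := fun n => surv p n x) (fun k => surv_succ_le p hsub k x) h

lemma surv_le_one (hsub : ∀ x, (∑' y, p x y) ≤ 1) (x : G) (n : ℕ) : surv p n x ≤ 1 := by
  rw [← surv_zero p x]; exact surv_anti p hsub x (Nat.zero_le n)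

lemma fhit_zero (x z : G) : fhit p 0 x z = 0 := rfl

/-- auxiliary kernel for the first-step decomposition of `fhit`. -/
noncomputable def gnext (z : G) (k : ℕ) (w : G) : ℝ≥0∞ :=
  if k = 0 then (if w = z then 1 else 0) else (if w = z then 0 else fhit p k w z)

lemma fhit_succ (k : ℕ) (x z : G) : fhit p (k + 1) x z = ∑' w, p x w * gnext p z k w := by
  cases k with
  | zero =>
    show p x z = _
    rw [tsum_eq_single z]
    · simp [gnext]
    · intro w hw; simp [gnext, hw]
  | succ k =>
    show ∑' w, (if w = z then 0 else p x w * fhit p (k + 1) w z) = _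
    refine tsum_congr fun w => ?_
    by_cases hw : w = z <;> simp [gnext, hw]

lemma hitProb_eq (x z : G) :
    hitProb p x z = ∑' w, p x w * (if w = z then 1 else hitProb p w z) := by
  rw [hitProb, tsum_eq_zero_add' ENNReal.summable, fhit_zero, zero_add]
  calc ∑' k, fhit p (k + 1) x z
      = ∑' k, ∑' w, p x w * gnext p z k w := tsum_congr fun k => fhit_succ p k x z
    _ = ∑' w, ∑' k, p x w * gnext p z k w := ENNReal.tsum_comm
    _ = ∑' w, p x w * ∑' k, gnext p z k w := tsum_congr fun w => ENNReal.tsum_mul_left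
    _ = _ := by
      refine tsum_congr fun w => ?_
      congr 1
      by_cases hw : w = z
      · rw [if_pos hw]
        rw [tsum_eq_single 0]
        · simp [gnext, hw]
        · intro k hk; simp [gnext, hk, hw]
      · rw [if_neg hw, tsum_eq_zero_add' (f := fun k => gnext p z k w) ENNReal.summable,
          hitProb, tsum_eq_zero_add' (f := fun k => fhit p k w z) ENNReal.summable]
        simp [gnext, hw, fhit_zero]

lemma sum_fhit_le_one (hsub : ∀ x, (∑' y, p x y) ≤ 1) (z : G) :
    ∀ (n : ℕ) (x : G), ∑ k ∈ Finset.range n, fhit p k x z ≤ 1 := by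
  intro n
  induction n with
  | zero => intro x; simp
  | succ n ih =>
    intro x
    rw [Finset.sum_range_succ']
    simp only [fhit_zero, add_zero]
    have hg : ∀ w : G, ∑ k ∈ Finset.range n, gnext p z k w ≤ 1 := by
      intro w
      by_cases hw : w = z
      · subst hw
        have : ∀ k, gnext p w k w = if k = 0 then 1 else 0 := by
          intro k; simp [gnext]
        simp only [this]
        rw [Finset.sum_ite_eq' (Finset.range n) 0 (fun _ => (1 : ℝ≥0∞))]
        split_ifs <;> simp
      · calc ∑ k ∈ Finset.range n, gnext p z k w
            ≤ ∑ k ∈ Finset.range n, fhit p k w z := by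
              refine Finset.sum_le_sum fun k _ => ?_
              by_cases hk : k = 0 <;> simp [gnext, hk, hw, fhit_zero]
          _ ≤ 1 := ih w
    calc ∑ k ∈ Finset.range n, fhit p (k + 1) x z
        = ∑ k ∈ Finset.range n, ∑' w, p x w * gnext p z k w :=
          Finset.sum_congr rfl fun k _ => fhit_succ p k x z
      _ = ∑' w, ∑ k ∈ Finset.range n, p x w * gnext p z k w :=
          (Summable.tsum_finsetSum fun _ _ => ENNReal.summable).symm
      _ = ∑' w, p x w * ∑ k ∈ Finset.range n, gnext p z k w := by
          refine tsum_congr fun w => ?_; rw [Finset.mul_sum]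
      _ ≤ ∑' w, p x w * 1 := ENNReal.tsum_le_tsum fun w => mul_le_mul_right (hg w) _
      _ ≤ 1 := by simpa using hsub x

lemma hitProb_le_one (hsub : ∀ x, (∑' y, p x y) ≤ 1) (x z : G) : hitProb p x z ≤ 1 := by
  rw [hitProb]
  refine Summable.tsum_le_of_sum_le ENNReal.summable fun s => ?_
  obtain ⟨n, hn⟩ := s.exists_nat_subset_range
  calc ∑ k ∈ s, fhit p k x z ≤ ∑ k ∈ Finset.range n, fhit p k x z :=
        Finset.sum_le_sum_of_subset hn
    _ ≤ 1 := sum_fhit_le_one p hsub z n x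

lemma hitProb_mul_surv_le (hsub : ∀ x, (∑' y, p x y) ≤ 1) (z : G) :
    ∀ (n : ℕ) (x : G), hitProb p x z * surv p n z ≤ surv p n x := by
  intro n
  induction n with
  | zero =>
    intro x
    rw [surv_zero, surv_zero, mul_one]
    exact hitProb_le_one p hsub x z
  | succ n ih =>
    intro x
    rw [hitProb_eq]
    calc (∑' w, p x w * (if w = z then 1 else hitProb p w z)) * surv p (n + 1) z
        = ∑' w, p x w * ((if w = z then 1 else hitProb p w z) * surv p (n + 1) z) := by
          rw [← ENNReal.tsum_mul_right]; exact tsum_congr fun w => mul_assoc _ _ _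
      _ ≤ ∑' w, p x w * surv p n w := by
          refine ENNReal.tsum_le_tsum fun w => mul_le_mul_right ?_ _
          by_cases hw : w = z
          · subst hw; rw [if_pos rfl, one_mul]; exact surv_succ_le p hsub n w
          · rw [if_neg hw]
            calc hitProb p w z * surv p (n + 1) z ≤ hitProb p w z * surv p n z :=
                  mul_le_mul_right (surv_succ_le p hsub n z) _
              _ ≤ surv p n w := ih w
      _ = surv p (n + 1) x := (surv_succ p n x).symm

lemma fhit_mul_surv_le (z : G) (n : ℕ) :
    ∀ (k : ℕ) (x : G), fhit p k x z * surv p n z ≤ surv p (k + n) x := by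
  intro k
  induction k with
  | zero => intro x; simp [fhit_zero]
  | succ k ih =>
    intro x
    have harr : k + 1 + n = (k + n) + 1 := by omega
    rw [fhit_succ, harr, surv_succ]
    calc (∑' w, p x w * gnext p z k w) * surv p n z
        = ∑' w, p x w * (gnext p z k w * surv p n z) := by
          rw [← ENNReal.tsum_mul_right]; exact tsum_congr fun w => mul_assoc _ _ _
      _ ≤ ∑' w, p x w * surv p (k + n) w := by
          refine ENNReal.tsum_le_tsum fun w => mul_le_mul_right ?_ _
          by_cases hk : k = 0
          · subst hk
            by_cases hw : w = z <;> simp [gnext, hw]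
          · by_cases hw : w = z
            · simp [gnext, hk, hw]
            · simpa [gnext, hk, hw] using ih w

lemma surv_pos (hsub : ∀ x, (∑' y, p x y) ≤ 1) {x : G} (hQ : 0 < hitProb p x x) (n : ℕ) :
    0 < surv p n x := by
  obtain ⟨k, hk⟩ : ∃ k, fhit p k x x ≠ 0 := by
    by_contra h
    push_neg at h
    rw [hitProb, ENNReal.tsum_eq_zero.2 h] at hQ
    exact lt_irrefl _ hQ
  have hk1 : 1 ≤ k := by
    rcases Nat.eq_zero_or_pos k with h | h
    · exact absurd (h ▸ hk) (by simp [fhit_zero])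
    · exact h
  have hj : ∀ j : ℕ, (fhit p k x x) ^ j ≤ surv p (j * k) x := by
    intro j
    induction j with
    | zero => simp [surv_zero]
    | succ j ih =>
      calc (fhit p k x x) ^ (j + 1) = fhit p k x x * (fhit p k x x) ^ j := pow_succ' _ _
        _ ≤ fhit p k x x * surv p (j * k) x := mul_le_mul_right ih _
        _ ≤ surv p (k + j * k) x := fhit_mul_surv_le p x (j * k) k x
        _ = surv p ((j + 1) * k) x := by ring_nf
  have h1 : surv p (n * k) x ≤ surv p n x :=
    surv_anti p hsub x (Nat.le_mul_of_pos_right n hk1)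
  have h2 : (0 : ℝ≥0∞) < (fhit p k x x) ^ n := pos_iff_ne_zero.2 (pow_ne_zero n hk)
  exact lt_of_lt_of_le h2 ((hj n).trans h1)

end Aux

theorem statement10 {G : Type*} [Group G] [Countable G]
    (p : G → G → ℝ≥0∞) (E : Set G)
    (hsupp : ∀ x y, p x y ≠ 0 → x ∈ E ∧ y ∈ E)
    (hsub : ∀ x, (∑' y, p x y) ≤ 1)
    (hirr : ∀ x ∈ E, ∀ y ∈ E, 0 < hitProb p x y)
    (htrans : ∀ x ∈ E, green p x x < ⊤)
    (hone : (1 : G) ∈ E)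
    (hmul : ∀ x ∈ E, ∀ y ∈ E, x * y ∈ E)
    (hmono : ∀ x ∈ E, ∀ y ∈ E, ∀ u ∈ E, p x y ≤ p (x * u) (y * u)) :
    (∀ n : ℕ, ∀ x ∈ E,
      kapp p (fun y => surv p n y / surv p n 1) x ≤ surv p n x / surv p n 1) ∧
    (∀ n : ℕ, ∀ x ∈ E,
      hitProb p x 1 ≤ surv p n x / surv p n 1 ∧
      surv p n x / surv p n 1 ≤ (hitProb p 1 x)⁻¹) ∧
    ∃ (φ : ℕ → ℕ) (f : G → ℝ≥0∞), StrictMono φ ∧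
      ∀ x ∈ E, Tendsto (fun k => surv p (φ k) x / surv p (φ k) 1) atTop (nhds (f x)) := by
  have hS1pos : ∀ n, surv p n 1 ≠ 0 := fun n => (surv_pos p hsub (hirr 1 hone 1 hone) n).ne'
  have hS1top : ∀ n, surv p n 1 ≠ ⊤ :=
    fun n => ((surv_le_one p hsub 1 n).trans_lt ENNReal.one_lt_top).ne
  refine ⟨?_, ?_, ?_⟩
  · intro n x _
    rw [kapp]
    calc ∑' y, p x y * (surv p n y / surv p n 1)
        = (∑' y, p x y * surv p n y) / surv p n 1 := by
          simp_rw [div_eq_mul_inv, ← mul_assoc]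
          exact ENNReal.tsum_mul_right
      _ = surv p (n + 1) x / surv p n 1 := by rw [← surv_succ]
      _ ≤ surv p n x / surv p n 1 := ENNReal.div_le_div_right (surv_succ_le p hsub n x) _
  · intro n x hx
    constructor
    · rw [ENNReal.le_div_iff_mul_le (Or.inl (hS1pos n)) (Or.inl (hS1top n))]
      exact hitProb_mul_surv_le p hsub 1 n x
    · have hQ : hitProb p 1 x ≠ 0 := (hirr 1 hone x hx).ne'
      have hQt : hitProb p 1 x ≠ ⊤ := ((hitProb_le_one p hsub 1 x).trans_lt ENNReal.one_lt_top).ne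
      rw [ENNReal.div_le_iff_le_mul (Or.inl (hS1pos n)) (Or.inl (hS1top n))]
      calc surv p n x = (hitProb p 1 x)⁻¹ * (hitProb p 1 x * surv p n x) := by
            rw [← mul_assoc, ENNReal.inv_mul_cancel hQ hQt, one_mul]
        _ ≤ (hitProb p 1 x)⁻¹ * surv p n 1 :=
            mul_le_mul_right (hitProb_mul_surv_le p hsub x n 1) _
  · obtain ⟨f, -, φ, hφ, hconv⟩ := isCompact_univ.tendsto_subseq
      (x := fun n (x : G) => surv p n x / surv p n 1) (fun n => Set.mem_univ _)
    exact ⟨φ, f, hφ, fun x _ => tendsto_pi_nhds.mp hconv x⟩
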